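/- arXiv:0908.3346 — 7 statements merged into one kernel-verified Lean document; each statement's English description precedes it below -/
import Mathlib

section
/- Let n be even, let M ∈ ℂ^{n×n} have a red–black harmonic aliasing pattern with respect to a red–black partition with down-sampling matrices D̄, D̃, with biorthogonal eigenvectors W, V (Vᴴ W = I) and eigen-decomposition M = W · diag(E_L, E_H) · Vᴴ, where E_L and E_H are the diagonal n/2 × n/2 blocks of eigenvalues associated with the L and H eigenvector partitions. Then the mirror matrix M⋆ = (ŪD̄ − ŨD̃) M (ŪD̄ − ŨD̃) satisfies M⋆ = W · diag(E_H, E_L) · Vᴴ; i.e., the mirror is a filter with the L and H eigenvalue blocks swapped. -/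
open Matrix

/-- The red harmonic aliasing pattern `N̄ = (1/2)·[[I, I], [I, I]]`
(blocks of size `n`, acting on a fine grid of `2·n` nodes indexed by `Fin n ⊕ Fin n`). -/
noncomputable def Nbar (n : ℕ) : Matrix (Fin n ⊕ Fin n) (Fin n ⊕ Fin n) ℂ :=
  (1 / 2 : ℂ) • Matrix.fromBlocks 1 1 1 1

/-- The black harmonic aliasing pattern `Ñ = (1/2)·[[I, −I], [−I, I]]`. -/
noncomputable def Ntil (n : ℕ) : Matrix (Fin n ⊕ Fin n) (Fin n ⊕ Fin n) ℂ :=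
  (1 / 2 : ℂ) • Matrix.fromBlocks 1 (-1) (-1) 1

/-- `Dr` and `Db` are the red and black down-sampling matrices of a red–black
partition of the `2·n` fine-grid nodes into two halves: they are `{0,1}`-matrices,
the up-sampling matrices are their transposes, and they satisfy
`D̄Ū = I`, `D̃Ũ = I`, `D̃Ū = 0`, `D̄Ũ = 0` and `ŪD̄ + ŨD̃ = I`. -/
def IsRBPartition {n : ℕ} (Dr Db : Matrix (Fin n) (Fin n ⊕ Fin n) ℂ) : Prop :=
  (∀ i j, Dr i j = 0 ∨ Dr i j = 1) ∧ (∀ i j, Db i j = 0 ∨ Db i j = 1) ∧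
  Dr * Drᵀ = 1 ∧ Db * Dbᵀ = 1 ∧ Db * Drᵀ = 0 ∧ Dr * Dbᵀ = 0 ∧
  Drᵀ * Dr + Dbᵀ * Db = 1

/-- The mirror `M⋆ = (ŪD̄ − ŨD̃) M (ŪD̄ − ŨD̃)` of a matrix with respect to a
red–black partition. -/
noncomputable def mirror {n : ℕ} (Dr Db : Matrix (Fin n) (Fin n ⊕ Fin n) ℂ)
    (M : Matrix (Fin n ⊕ Fin n) (Fin n ⊕ Fin n) ℂ) :
    Matrix (Fin n ⊕ Fin n) (Fin n ⊕ Fin n) ℂ :=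
  (Drᵀ * Dr - Dbᵀ * Db) * M * (Drᵀ * Dr - Dbᵀ * Db)

/-! Because `W` is square, `Vᴴ W = I` forces `W Vᴴ = I`, so the aliasing hypotheses say
`ŪD̄ = W N̄ Vᴴ` and `ŨD̃ = W Ñ Vᴴ`. The sign matrix `ŪD̄ − ŨD̃` is therefore `W (N̄ − Ñ) Vᴴ`,
and `N̄ − Ñ = [[0, I], [I, 0]]` is the block swap; conjugating `diag(E_L, E_H)` by it
exchanges the two blocks. -/

theorem mul_mul_mul_conj_of_mul_eq_one {G : Type*} [Monoid G] {w b : G} (h : b * w = 1)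
    (x y z : G) : w * x * b * (w * y * b) * (w * z * b) = w * (x * y * z) * b := by
  simp only [mul_assoc]
  rw [← mul_assoc b w, h, one_mul, ← mul_assoc b w, h, one_mul]

theorem Matrix.mul_conj_mul_cancel_of_mul_eq_one {ι R : Type*} [Fintype ι] [DecidableEq ι]
    [CommRing R] {W B : Matrix ι ι R} (h : B * W = 1) (A : Matrix ι ι R) :
    W * (B * A * W) * B = A := by
  have h' : W * B = 1 := mul_eq_one_comm.mp h
  simp only [Matrix.mul_assoc]
  rw [h', Matrix.mul_one, ← Matrix.mul_assoc, h', Matrix.one_mul]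

theorem Matrix.fromBlocks_swap_conj {m R : Type*} [Fintype m] [DecidableEq m] [Semiring R]
    (A D : Matrix m m R) :
    fromBlocks 0 1 1 0 * fromBlocks A 0 0 D * fromBlocks 0 1 1 0 = fromBlocks D 0 0 A := by
  simp [fromBlocks_multiply]

theorem Nbar_sub_Ntil (n : ℕ) : Nbar n - Ntil n = fromBlocks 0 1 1 0 := by
  ext (i | i) (j | j) <;> by_cases h : i = j <;> simp [Nbar, Ntil, one_apply, h] <;> norm_num

theorem mirror_swaps_eigenvalue_blocks_general {n : ℕ}
    (Dr Db : Matrix (Fin n) (Fin n ⊕ Fin n) ℂ)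
    (W V M : Matrix (Fin n ⊕ Fin n) (Fin n ⊕ Fin n) ℂ)
    (eL eH : Fin n → ℂ)
    (hbi : Vᴴ * W = 1)
    (hred : Vᴴ * (Drᵀ * Dr) * W = Nbar n)
    (hblack : Vᴴ * (Dbᵀ * Db) * W = Ntil n)
    (hM : M = W * Matrix.fromBlocks (diagonal eL) 0 0 (diagonal eH) * Vᴴ) :
    mirror Dr Db M = W * Matrix.fromBlocks (diagonal eH) 0 0 (diagonal eL) * Vᴴ := by
  have hsign : Drᵀ * Dr - Dbᵀ * Db = W * fromBlocks 0 1 1 0 * Vᴴ := by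
    rw [← Nbar_sub_Ntil, ← hred, ← hblack, ← Matrix.sub_mul, ← Matrix.mul_sub,
      Matrix.mul_conj_mul_cancel_of_mul_eq_one hbi]
  rw [mirror, hsign, hM, mul_mul_mul_conj_of_mul_eq_one hbi, Matrix.fromBlocks_swap_conj]

/-- If `M = W · diag(E_L, E_H) · Vᴴ` has a red–black harmonic aliasing pattern,
then its mirror `M⋆ = (ŪD̄ − ŨD̃) M (ŪD̄ − ŨD̃)` is the filter
`M⋆ = W · diag(E_H, E_L) · Vᴴ` with the eigenvalue blocks swapped. -/
theorem mirror_swaps_eigenvalue_blocks {n : ℕ}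
    (Dr Db : Matrix (Fin n) (Fin n ⊕ Fin n) ℂ)
    (hpart : IsRBPartition Dr Db)
    (W V M : Matrix (Fin n ⊕ Fin n) (Fin n ⊕ Fin n) ℂ)
    (eL eH : Fin n → ℂ)
    (hbi : Vᴴ * W = 1)
    (hred : Vᴴ * (Drᵀ * Dr) * W = Nbar n)
    (hblack : Vᴴ * (Dbᵀ * Db) * W = Ntil n)
    (hM : M = W * Matrix.fromBlocks (diagonal eL) 0 0 (diagonal eH) * Vᴴ) :
    mirror Dr Db M = W * Matrix.fromBlocks (diagonal eH) 0 0 (diagonal eL) * Vᴴ :=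
  mirror_swaps_eigenvalue_blocks_general Dr Db W V M eL eH hbi hred hblack hM
end

section
/- In a red–black harmonic two-grid configuration, the red coarse system matrix defined by the Galerkin condition Ā = D̄ F̄_R A F̄_I Ū satisfies Ā = (D̄ W_L) Δ̄ (D̄ V_L)ᴴ, where Δ̄ = Π̄_{R,L} Λ_L Π̄_{I,L} + Π̄_{R,H} Λ_H Π̄_{I,H}. -/
/-!
Write `A`, `F̄_R`, `F̄_I` as `W Λ Vᴴ`, `W Π̄_R Vᴴ`, `W Π̄_I Vᴴ`; since `Vᴴ W = I` the product
`F̄_R A F̄_I` is `W diag(X, Y) Vᴴ` with `X = Π̄_{R,L} Λ_L Π̄_{I,L}`, `Y = Π̄_{R,H} Λ_H Π̄_{I,H}`,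
so `Ā = (D̄ W_L) X (V_Lᴴ Ū) + (D̄ W_H) Y (V_Hᴴ Ū)`. The red aliasing pattern
`Vᴴ Ū D̄ W = N̄` gives `D̄ W N̄ = D̄ W` and `N̄ Vᴴ Ū = Vᴴ Ū`, and since `N̄` averages the two
halves this means `D̄ W_H = D̄ W_L` and `V_Hᴴ Ū = V_Lᴴ Ū`. Finally `Ū = D̄ᴴ` because `D̄` is a
`{0,1}`-matrix, so `V_Lᴴ Ū = (D̄ V_L)ᴴ`.
-/

open Matrix

theorem Matrix.conjTranspose_eq_transpose_of_forall_eq_zero_or_one {m k α : Type*} [Semiring α]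
    [StarRing α] {M : Matrix m k α} (hM : ∀ i j, M i j = 0 ∨ M i j = 1) : Mᴴ = Mᵀ := by
  ext i j
  rcases hM j i with h | h <;> simp [h]

theorem Matrix.mul_fromBlocks_zero_zero_mul {m l n₁ n₂ α : Type*} [Fintype n₁] [Fintype n₂]
    [Semiring α] (P : Matrix m (n₁ ⊕ n₂) α) (X : Matrix n₁ n₁ α) (Y : Matrix n₂ n₂ α)
    (Q : Matrix (n₁ ⊕ n₂) l α) :
    P * fromBlocks X 0 0 Y * Q =
      P.submatrix id Sum.inl * X * Q.submatrix Sum.inl id +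
        P.submatrix id Sum.inr * Y * Q.submatrix Sum.inr id := by
  rw [← fromCols_toCols P, ← fromRows_toRows Q, fromCols_mul_fromBlocks, fromCols_mul_fromRows]
  simp only [Matrix.mul_zero, add_zero, zero_add]
  rfl

section Biorthogonal

variable {ι α : Type*} [Fintype ι] [DecidableEq ι] [CommRing α] {W B : Matrix ι ι α}

theorem Matrix.conj_mul_conj_of_mul_eq_one (hBW : B * W = 1) (M N : Matrix ι ι α) :
    W * M * B * (W * N * B) = W * (M * N) * B := by
  simp only [Matrix.mul_assoc, ← Matrix.mul_assoc B W, hBW, Matrix.one_mul]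

theorem Matrix.mul_eq_mul_right_of_mul_mul_eq (hBW : B * W = 1) {P N : Matrix ι ι α}
    (h : B * P * W = N) : P * W = W * N := by
  rw [← h, ← Matrix.mul_assoc, ← Matrix.mul_assoc, mul_eq_one_comm.mp hBW, Matrix.one_mul]

theorem Matrix.mul_eq_mul_left_of_mul_mul_eq (hBW : B * W = 1) {P N : Matrix ι ι α}
    (h : B * P * W = N) : B * P = N * B := by
  rw [← h, Matrix.mul_assoc _ W, mul_eq_one_comm.mp hBW, Matrix.mul_one]

end Biorthogonal

section Nbar

variable {m : Type*} {n : ℕ}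

theorem mul_Nbar_apply_inl (M : Matrix m (Fin n ⊕ Fin n) ℂ) (i : m) (j : Fin n) :
    (M * Nbar n) i (Sum.inl j) = (M i (Sum.inl j) + M i (Sum.inr j)) / 2 := by
  simp [Nbar, mul_apply, Fintype.sum_sum_type, one_apply, div_eq_mul_inv, mul_add, mul_comm]

theorem Nbar_mul_apply_inl (M : Matrix (Fin n ⊕ Fin n) m ℂ) (i : Fin n) (j : m) :
    (Nbar n * M) (Sum.inl i) j = (M (Sum.inl i) j + M (Sum.inr i) j) / 2 := by
  simp [Nbar, mul_apply, Fintype.sum_sum_type, one_apply, div_eq_mul_inv, mul_add, mul_comm]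

theorem submatrix_inl_eq_inr_of_mul_Nbar_eq_self {M : Matrix m (Fin n ⊕ Fin n) ℂ}
    (h : M * Nbar n = M) : M.submatrix id Sum.inl = M.submatrix id Sum.inr := by
  ext i j
  have hij := mul_Nbar_apply_inl M i j
  rw [h] at hij
  simp only [submatrix_apply, id_eq]
  linear_combination 2 * hij

theorem submatrix_inl_eq_inr_of_Nbar_mul_eq_self {M : Matrix (Fin n ⊕ Fin n) m ℂ}
    (h : Nbar n * M = M) : M.submatrix Sum.inl id = M.submatrix Sum.inr id := by
  ext i j
  have hij := Nbar_mul_apply_inl M i j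
  rw [h] at hij
  simp only [submatrix_apply, id_eq]
  linear_combination 2 * hij

end Nbar

theorem red_coarse_matrix_eq_general {n : ℕ}
    (Dr Db : Matrix (Fin n) (Fin n ⊕ Fin n) ℂ)
    (hpart : IsRBPartition Dr Db)
    (W V A : Matrix (Fin n ⊕ Fin n) (Fin n ⊕ Fin n) ℂ)
    (lamL lamH : Fin n → ℂ)
    (hbi : Vᴴ * W = 1)
    (hred : Vᴴ * (Drᵀ * Dr) * W = Nbar n)
    (hA : A = W * Matrix.fromBlocks (diagonal lamL) 0 0 (diagonal lamH) * Vᴴ)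
    (pRL pRH pIL pIH : Fin n → ℂ)
    (FbarR FbarI : Matrix (Fin n ⊕ Fin n) (Fin n ⊕ Fin n) ℂ)
    (hFbarR : FbarR = W * Matrix.fromBlocks (diagonal pRL) 0 0 (diagonal pRH) * Vᴴ)
    (hFbarI : FbarI = W * Matrix.fromBlocks (diagonal pIL) 0 0 (diagonal pIH) * Vᴴ) :
    Dr * FbarR * A * FbarI * Drᵀ =
      (Dr * W.submatrix id Sum.inl) *
        (diagonal pRL * diagonal lamL * diagonal pIL +
          diagonal pRH * diagonal lamH * diagonal pIH) *
        (Dr * V.submatrix id Sum.inl)ᴴ := by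
  obtain ⟨hDr01, -, hDrDrT, -⟩ := hpart
  set X := diagonal pRL * diagonal lamL * diagonal pIL
  set Y := diagonal pRH * diagonal lamH * diagonal pIH
  have hcore : FbarR * A * FbarI = W * fromBlocks X 0 0 Y * Vᴴ := by
    rw [hFbarR, hA, hFbarI, conj_mul_conj_of_mul_eq_one hbi, conj_mul_conj_of_mul_eq_one hbi]
    simp only [fromBlocks_multiply, Matrix.mul_zero, Matrix.zero_mul, add_zero, zero_add]
    rfl
  have hcols : Dr * W.submatrix id Sum.inr = Dr * W.submatrix id Sum.inl := by
    refine (submatrix_inl_eq_inr_of_mul_Nbar_eq_self (M := Dr * W) ?_).symm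
    rw [Matrix.mul_assoc, ← mul_eq_mul_right_of_mul_mul_eq hbi hred, ← Matrix.mul_assoc,
      ← Matrix.mul_assoc, hDrDrT, Matrix.one_mul]
  have hrows : (V.submatrix id Sum.inr)ᴴ * Drᵀ = (V.submatrix id Sum.inl)ᴴ * Drᵀ := by
    refine (submatrix_inl_eq_inr_of_Nbar_mul_eq_self (M := Vᴴ * Drᵀ) ?_).symm
    rw [← Matrix.mul_assoc, ← mul_eq_mul_left_of_mul_mul_eq hbi hred, Matrix.mul_assoc,
      Matrix.mul_assoc, hDrDrT, Matrix.mul_one]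
  have hDrH : Drᴴ = Drᵀ := conjTranspose_eq_transpose_of_forall_eq_zero_or_one hDr01
  calc Dr * FbarR * A * FbarI * Drᵀ = Dr * (FbarR * A * FbarI) * Drᵀ := by
        simp only [Matrix.mul_assoc]
    _ = Dr * W * fromBlocks X 0 0 Y * (Vᴴ * Drᵀ) := by
        rw [hcore]
        simp only [Matrix.mul_assoc]
    _ = Dr * W.submatrix id Sum.inl * X * ((V.submatrix id Sum.inl)ᴴ * Drᵀ) +
          Dr * W.submatrix id Sum.inr * Y * ((V.submatrix id Sum.inr)ᴴ * Drᵀ) :=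
        mul_fromBlocks_zero_zero_mul _ _ _ _
    _ = _ := by
        rw [hcols, hrows, conjTranspose_mul, hDrH]
        simp only [Matrix.mul_add, Matrix.add_mul, Matrix.mul_assoc]

/-- In a red–black harmonic two-grid configuration, the red Galerkin coarse
system matrix `Ā = D̄ F̄_R A F̄_I Ū` satisfies `Ā = (D̄ W_L) Δ̄ (D̄ V_L)ᴴ` with
`Δ̄ = Π̄_{R,L} Λ_L Π̄_{I,L} + Π̄_{R,H} Λ_H Π̄_{I,H}`. -/
theorem red_coarse_matrix_eq {n : ℕ}
    (Dr Db : Matrix (Fin n) (Fin n ⊕ Fin n) ℂ)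
    (hpart : IsRBPartition Dr Db)
    (W V A : Matrix (Fin n ⊕ Fin n) (Fin n ⊕ Fin n) ℂ)
    (lamL lamH : Fin n → ℂ)
    (hbi : Vᴴ * W = 1)
    (hred : Vᴴ * (Drᵀ * Dr) * W = Nbar n)
    (hblack : Vᴴ * (Dbᵀ * Db) * W = Ntil n)
    (hA : A = W * Matrix.fromBlocks (diagonal lamL) 0 0 (diagonal lamH) * Vᴴ)
    (pRL pRH pIL pIH : Fin n → ℂ)
    (FbarR FbarI : Matrix (Fin n ⊕ Fin n) (Fin n ⊕ Fin n) ℂ)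
    (hFbarR : FbarR = W * Matrix.fromBlocks (diagonal pRL) 0 0 (diagonal pRH) * Vᴴ)
    (hFbarI : FbarI = W * Matrix.fromBlocks (diagonal pIL) 0 0 (diagonal pIH) * Vᴴ) :
    Dr * FbarR * A * FbarI * Drᵀ =
      (Dr * W.submatrix id Sum.inl) *
        (diagonal pRL * diagonal lamL * diagonal pIL +
          diagonal pRH * diagonal lamH * diagonal pIH) *
        (Dr * V.submatrix id Sum.inl)ᴴ :=
  red_coarse_matrix_eq_general Dr Db hpart W V A lamL lamH hbi hred hA pRL pRH pIL pIH FbarR FbarI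
    hFbarR hFbarI
end

section
/- In a red–black harmonic two-grid configuration, suppose Δ̄ = Π̄_{R,L} Λ_L Π̄_{I,L} + Π̄_{R,H} Λ_H Π̄_{I,H} is invertible. Then the red coarse system matrix Ā = D̄ F̄_R A F̄_I Ū is invertible with inverse Ā⁻¹ = 4 (D̄ W_L) Δ̄⁻¹ (D̄ V_L)ᴴ. -/
open Matrix

/-! With `X = D̄W` and `Z = VᴴŪ`, biorthogonality and `D̄Ū = I` give `XZ = I`, while the red
aliasing pattern says `ZX = N̄`. Hence `XN̄ = X` and `N̄Z = Z`, which forces the two column halves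
of `X` (and the two row halves of `Z`) to coincide: `X = [X_L X_L]`, `Z = [R; R]` with
`X_L = D̄W_L` and `R = (D̄V_L)ᴴ` (`D̄` is a 0/1 matrix). Then `XZ = I` reads `2 X_L R = I`, the
coarse matrix `X diag(Π̄_R Λ Π̄_I) Z` collapses to `X_L Δ̄ R`, and `R X_L = I/2` makes
`4 X_L Δ̄⁻¹ R` its inverse. -/

namespace Matrix

section Nbar

variable {m : Type*} {n : ℕ}

lemma mul_Nbar (X : Matrix m (Fin n ⊕ Fin n) ℂ) :
    X * Nbar n = fromCols ((1 / 2 : ℂ) • (X.toCols₁ + X.toCols₂))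
      ((1 / 2 : ℂ) • (X.toCols₁ + X.toCols₂)) := by
  rw [Nbar, Matrix.mul_smul]
  ext i (j | j) <;> simp [mul_apply, Fintype.sum_sum_type, one_apply, mul_add]

lemma Nbar_mul (Z : Matrix (Fin n ⊕ Fin n) m ℂ) :
    Nbar n * Z = fromRows ((1 / 2 : ℂ) • (Z.toRows₁ + Z.toRows₂))
      ((1 / 2 : ℂ) • (Z.toRows₁ + Z.toRows₂)) := by
  rw [Nbar, Matrix.smul_mul]
  ext (i | i) j <;> simp [mul_apply, Fintype.sum_sum_type, one_apply, mul_add]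

lemma toCols₁_eq_toCols₂_of_mul_Nbar {X : Matrix m (Fin n ⊕ Fin n) ℂ} (h : X * Nbar n = X) :
    X.toCols₁ = X.toCols₂ := by
  rw [← h, mul_Nbar, toCols₁_fromCols, toCols₂_fromCols]

lemma toRows₁_eq_toRows₂_of_Nbar_mul {Z : Matrix (Fin n ⊕ Fin n) m ℂ} (h : Nbar n * Z = Z) :
    Z.toRows₁ = Z.toRows₂ := by
  rw [← h, Nbar_mul, toRows₁_fromRows, toRows₂_fromRows]

end Nbar

section EqualHalves

variable {K l m n : Type*} [CommSemiring K] [Fintype n] {X : Matrix l (n ⊕ n) K}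
  {Z : Matrix (n ⊕ n) m K}

lemma mul_eq_two_smul_toCols₁_mul_toRows₁ (hX : X.toCols₁ = X.toCols₂)
    (hZ : Z.toRows₁ = Z.toRows₂) : X * Z = (2 : K) • (X.toCols₁ * Z.toRows₁) := by
  rw [← fromCols_toCols X, ← fromRows_toRows Z, ← hX, ← hZ, fromCols_mul_fromRows, two_smul,
    toCols₁_fromCols, toRows₁_fromRows]

lemma mul_fromBlocks_mul_eq_toCols₁_mul_add_mul_toRows₁ (hX : X.toCols₁ = X.toCols₂)
    (hZ : Z.toRows₁ = Z.toRows₂) (A D : Matrix n n K) :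
    X * fromBlocks A 0 0 D * Z = X.toCols₁ * (A + D) * Z.toRows₁ := by
  rw [← fromCols_toCols X, ← fromRows_toRows Z, ← hX, ← hZ, fromCols_mul_fromBlocks,
    fromCols_mul_fromRows, toCols₁_fromCols, toRows₁_fromRows]
  simp only [Matrix.mul_zero, add_zero, zero_add, Matrix.mul_add, Matrix.add_mul]

end EqualHalves

lemma mul_mul_mul_smul_mul_inv_mul_eq_one {K m : Type*} [CommRing K] [Fintype m] [DecidableEq m]
    {X R Δ : Matrix m m K} {c : K} (hXR : c • (X * R) = 1) (hΔ : IsUnit Δ) :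
    X * Δ * R * (c ^ 2 • (X * Δ⁻¹ * R)) = 1 := by
  have hRX : c • (R * X) = 1 := by
    rw [← Matrix.mul_smul, mul_eq_one_comm, Matrix.smul_mul, hXR]
  calc X * Δ * R * (c ^ 2 • (X * Δ⁻¹ * R))
      = c • (X * Δ * (c • (R * X)) * Δ⁻¹ * R) := by
        simp only [Matrix.mul_smul, Matrix.smul_mul, smul_smul, Matrix.mul_assoc, sq]
    _ = 1 := by
        rw [hRX, Matrix.mul_one, mul_nonsing_inv_cancel_right Δ X ((isUnit_iff_isUnit_det Δ).mp hΔ),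
          hXR]

lemma fromBlocks_zero_zero_mul_fromBlocks_zero_zero {α m n : Type*} [Fintype m] [Fintype n]
    [NonUnitalNonAssocSemiring α] (A A' : Matrix m m α) (D D' : Matrix n n α) :
    fromBlocks A 0 0 D * fromBlocks A' 0 0 D' = fromBlocks (A * A') 0 0 (D * D') := by
  simp only [fromBlocks_multiply, Matrix.mul_zero, Matrix.zero_mul, add_zero, zero_add]

lemma conj_mul_conj_mul_conj {α m : Type*} [Fintype m] [DecidableEq m] [Semiring α]
    {W V : Matrix m m α} (h : V * W = 1) (P Q R : Matrix m m α) :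
    W * P * V * (W * Q * V) * (W * R * V) = W * (P * Q * R) * V := by
  have hVW (M : Matrix m m α) : V * (W * M) = M := by rw [← Matrix.mul_assoc, h, Matrix.one_mul]
  simp only [Matrix.mul_assoc, hVW]

lemma conjTranspose_eq_transpose_of_eq_zero_or_eq_one {α m n : Type*} [Semiring α] [StarRing α]
    {D : Matrix m n α} (hD : ∀ i j, D i j = 0 ∨ D i j = 1) : Dᴴ = Dᵀ := by
  ext i j
  rcases hD j i with h | h <;> simp [h]

end Matrix

theorem red_coarse_matrix_inverse_general {n : ℕ}
    (Dr Db : Matrix (Fin n) (Fin n ⊕ Fin n) ℂ)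
    (hpart : IsRBPartition Dr Db)
    (W V A : Matrix (Fin n ⊕ Fin n) (Fin n ⊕ Fin n) ℂ)
    (lamL lamH : Fin n → ℂ)
    (hbi : Vᴴ * W = 1)
    (hred : Vᴴ * (Drᵀ * Dr) * W = Nbar n)
    (hA : A = W * Matrix.fromBlocks (diagonal lamL) 0 0 (diagonal lamH) * Vᴴ)
    (pRL pRH pIL pIH : Fin n → ℂ)
    (FbarR FbarI : Matrix (Fin n ⊕ Fin n) (Fin n ⊕ Fin n) ℂ)
    (hFbarR : FbarR = W * Matrix.fromBlocks (diagonal pRL) 0 0 (diagonal pRH) * Vᴴ)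
    (hFbarI : FbarI = W * Matrix.fromBlocks (diagonal pIL) 0 0 (diagonal pIH) * Vᴴ)
    (Δbar : Matrix (Fin n) (Fin n) ℂ)
    (hΔdef : Δbar = diagonal pRL * diagonal lamL * diagonal pIL +
        diagonal pRH * diagonal lamH * diagonal pIH)
    (hΔ : IsUnit Δbar) :
    IsUnit (Dr * FbarR * A * FbarI * Drᵀ) ∧
    (Dr * FbarR * A * FbarI * Drᵀ)⁻¹ =
      (4 : ℂ) • ((Dr * W.submatrix id Sum.inl) * Δbar⁻¹ *
        (Dr * V.submatrix id Sum.inl)ᴴ) := by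
  obtain ⟨hDr01, -, hDrDr, -⟩ := hpart
  set X := Dr * W
  set Z := Vᴴ * Drᵀ
  have hXZ : X * Z = 1 := by
    rw [Matrix.mul_assoc, ← Matrix.mul_assoc W, mul_eq_one_comm.mp hbi, Matrix.one_mul, hDrDr]
  have hZX : Z * X = Nbar n := by rw [← hred]; simp only [X, Z, Matrix.mul_assoc]
  have hX : X.toCols₁ = X.toCols₂ := toCols₁_eq_toCols₂_of_mul_Nbar <| by
    rw [← hZX, ← Matrix.mul_assoc, hXZ, Matrix.one_mul]
  have hZ : Z.toRows₁ = Z.toRows₂ := toRows₁_eq_toRows₂_of_Nbar_mul <| by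
    rw [← hZX, Matrix.mul_assoc, hXZ, Matrix.mul_one]
  have hX₁ : Dr * W.submatrix id Sum.inl = X.toCols₁ := rfl
  have hZ₁ : (Dr * V.submatrix id Sum.inl)ᴴ = Z.toRows₁ := by
    rw [conjTranspose_mul, conjTranspose_eq_transpose_of_eq_zero_or_eq_one hDr01]
    rfl
  have hcoarse : Dr * FbarR * A * FbarI * Drᵀ = X * fromBlocks
      (diagonal pRL * diagonal lamL * diagonal pIL) 0 0
      (diagonal pRH * diagonal lamH * diagonal pIH) * Z := by
    rw [show Dr * FbarR * A * FbarI = Dr * (FbarR * A * FbarI) by simp only [Matrix.mul_assoc],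
      hFbarR, hA, hFbarI, conj_mul_conj_mul_conj hbi,
      fromBlocks_zero_zero_mul_fromBlocks_zero_zero, fromBlocks_zero_zero_mul_fromBlocks_zero_zero]
    simp only [X, Z, Matrix.mul_assoc]
  have hinv := mul_mul_mul_smul_mul_inv_mul_eq_one
    (by rw [← mul_eq_two_smul_toCols₁_mul_toRows₁ hX hZ, hXZ]) hΔ
  rw [show (2 : ℂ) ^ 2 = 4 by norm_num] at hinv
  rw [hcoarse, mul_fromBlocks_mul_eq_toCols₁_mul_add_mul_toRows₁ hX hZ, ← hΔdef, hX₁, hZ₁]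
  exact ⟨(isUnit_iff_isUnit_det _).mpr (isUnit_det_of_right_inverse hinv), inv_eq_right_inv hinv⟩

/-- In a red–black harmonic two-grid configuration with
`Δ̄ = Π̄_{R,L} Λ_L Π̄_{I,L} + Π̄_{R,H} Λ_H Π̄_{I,H}` invertible, the red Galerkin
coarse matrix `Ā = D̄ F̄_R A F̄_I Ū` is invertible with
`Ā⁻¹ = 4 (D̄ W_L) Δ̄⁻¹ (D̄ V_L)ᴴ`. -/
theorem red_coarse_matrix_inverse {n : ℕ}
    (Dr Db : Matrix (Fin n) (Fin n ⊕ Fin n) ℂ)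
    (hpart : IsRBPartition Dr Db)
    (W V A : Matrix (Fin n ⊕ Fin n) (Fin n ⊕ Fin n) ℂ)
    (lamL lamH : Fin n → ℂ)
    (hbi : Vᴴ * W = 1)
    (hred : Vᴴ * (Drᵀ * Dr) * W = Nbar n)
    (hblack : Vᴴ * (Dbᵀ * Db) * W = Ntil n)
    (hA : A = W * Matrix.fromBlocks (diagonal lamL) 0 0 (diagonal lamH) * Vᴴ)
    (pRL pRH pIL pIH : Fin n → ℂ)
    (FbarR FbarI : Matrix (Fin n ⊕ Fin n) (Fin n ⊕ Fin n) ℂ)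
    (hFbarR : FbarR = W * Matrix.fromBlocks (diagonal pRL) 0 0 (diagonal pRH) * Vᴴ)
    (hFbarI : FbarI = W * Matrix.fromBlocks (diagonal pIL) 0 0 (diagonal pIH) * Vᴴ)
    (Δbar : Matrix (Fin n) (Fin n) ℂ)
    (hΔdef : Δbar = diagonal pRL * diagonal lamL * diagonal pIL +
        diagonal pRH * diagonal lamH * diagonal pIH)
    (hΔ : IsUnit Δbar) :
    IsUnit (Dr * FbarR * A * FbarI * Drᵀ) ∧
    (Dr * FbarR * A * FbarI * Drᵀ)⁻¹ =
      (4 : ℂ) • ((Dr * W.submatrix id Sum.inl) * Δbar⁻¹ *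
        (Dr * V.submatrix id Sum.inl)ᴴ) :=
  red_coarse_matrix_inverse_general Dr Db hpart W V A lamL lamH hbi hred hA pRL pRH pIL pIH FbarR
    FbarI hFbarR hFbarI Δbar hΔdef hΔ
end

section
/- In a red–black harmonic two-grid configuration with Δ̄ = Π̄_{R,L} Λ_L Π̄_{I,L} + Π̄_{R,H} Λ_H Π̄_{I,H} invertible, the red coarse grid correction matrix K̄ = I − (F̄_I Ū) Ā⁻¹ (D̄ F̄_R) A, where Ā = D̄ F̄_R A F̄_I Ū, admits the decomposition K̄ = W · [[Γ̄_{L→L}, Γ̄_{H→L}],[Γ̄_{L→H}, Γ̄_{H→H}]] · Vᴴ with diagonal blocks Γ̄_{L→L} = I − Π̄_{I,L} Δ̄⁻¹ Π̄_{R,L} Λ_L, Γ̄_{H→L} = −Π̄_{I,L} Δ̄⁻¹ Π̄_{R,H} Λ_H, Γ̄_{L→H} = −Π̄_{I,H} Δ̄⁻¹ Π̄_{R,L} Λ_L and Γ̄_{H→H} = I − Π̄_{I,H} Δ̄⁻¹ Π̄_{R,H} Λ_H. -/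
/-! With `φ X := D̄ (W X Vᴴ) Ū`, the relations `ŪD̄ = W N̄ Vᴴ` and `D̄Ū = I` give
`φ X * φ Y = φ (X N̄ Y)`, `φ X = φ (N̄ X N̄)` and `φ N̄ = I`. For block-diagonal `M`, `N̄ M N̄`
only depends on the sum of the two blocks, which for `M = Π̄_R Λ Π̄_I` is `Δ̄`. Hence
`Ā = φ M` has inverse `φ T` for any `T` with `N̄ T N̄ = [[Δ̄⁻¹, Δ̄⁻¹], [Δ̄⁻¹, Δ̄⁻¹]]`, and the
correction term `Ī_I Ā⁻¹ Ī_R A` becomes `W Π̄_I (N̄ T N̄) Π̄_R Λ Vᴴ`, whose blocks are the `Γ̄`'s. -/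

open Matrix

section Conjugation

variable {l R : Type*} [Fintype l] [DecidableEq l] [CommRing R] {W Vh : Matrix l l R}

theorem conj_mul_conj (hVW : Vh * W = 1) (X Y : Matrix l l R) :
    W * X * Vh * (W * Y * Vh) = W * (X * Y) * Vh := by
  simp only [Matrix.mul_assoc, ← Matrix.mul_assoc Vh W, hVW, Matrix.one_mul]

theorem one_sub_conj (hVW : Vh * W = 1) (X : Matrix l l R) :
    1 - W * X * Vh = W * (1 - X) * Vh := by
  rw [Matrix.mul_sub, Matrix.sub_mul, Matrix.mul_one, mul_eq_one_comm.mp hVW]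

theorem eq_conj_of_conj_eq (hVW : Vh * W = 1) {P N : Matrix l l R} (h : Vh * P * W = N) :
    P = W * N * Vh := by
  have hWV := mul_eq_one_comm.mp hVW
  rw [← h, Matrix.mul_assoc, Matrix.mul_assoc, hWV, Matrix.mul_one, ← Matrix.mul_assoc, hWV,
    Matrix.one_mul]

end Conjugation

section Galerkin

variable {l m R : Type*} [Fintype l] [DecidableEq l] [Fintype m] [CommRing R]
  {W Vh N : Matrix l l R} {D : Matrix m l R} {U : Matrix l m R}

theorem galerkin_mul (hVW : Vh * W = 1) (hUD : U * D = W * N * Vh) (X Y : Matrix l l R) :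
    D * (W * X * Vh) * U * (D * (W * Y * Vh) * U) = D * (W * (X * N * Y) * Vh) * U := by
  calc D * (W * X * Vh) * U * (D * (W * Y * Vh) * U)
      = D * (W * X * Vh * (U * D) * (W * Y * Vh)) * U := by simp only [Matrix.mul_assoc]
    _ = D * (W * (X * N * Y) * Vh) * U := by rw [hUD, conj_mul_conj hVW, conj_mul_conj hVW]

theorem galerkin_correction (hVW : Vh * W = 1) (hUD : U * D = W * N * Vh)
    (X T Y : Matrix l l R) :
    W * X * Vh * U * (D * (W * T * Vh) * U) * (D * (W * Y * Vh)) =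
      W * (X * (N * T * N) * Y) * Vh := by
  calc W * X * Vh * U * (D * (W * T * Vh) * U) * (D * (W * Y * Vh))
      = W * X * Vh * (U * D) * (W * T * Vh) * (U * D) * (W * Y * Vh) := by
        simp only [Matrix.mul_assoc]
    _ = W * (X * (N * T * N) * Y) * Vh := by
        rw [hUD, conj_mul_conj hVW, conj_mul_conj hVW, conj_mul_conj hVW, conj_mul_conj hVW]
        simp only [Matrix.mul_assoc]

variable [DecidableEq m]

theorem galerkin_eq_galerkin_sandwich (hVW : Vh * W = 1) (hDU : D * U = 1)
    (hUD : U * D = W * N * Vh) (X : Matrix l l R) :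
    D * (W * X * Vh) * U = D * (W * (N * X * N) * Vh) * U := by
  calc D * (W * X * Vh) * U
      = D * U * D * (W * X * Vh) * (U * D * U) := by
        rw [hDU, Matrix.one_mul, Matrix.mul_assoc U, hDU, Matrix.mul_one]
    _ = D * (U * D * (W * X * Vh) * (U * D)) * U := by simp only [Matrix.mul_assoc]
    _ = D * (W * (N * X * N) * Vh) * U := by rw [hUD, conj_mul_conj hVW, conj_mul_conj hVW]

theorem galerkin_inv_eq (hVW : Vh * W = 1) (hDU : D * U = 1) (hUD : U * D = W * N * Vh)
    {M T : Matrix l l R} (hMT : N * M * (N * T * N) = N) :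
    (D * (W * M * Vh) * U)⁻¹ = D * (W * T * Vh) * U := by
  refine Matrix.inv_eq_right_inv ?_
  have hMT' : N * (M * N * T) * N = N := by simpa only [Matrix.mul_assoc] using hMT
  rw [galerkin_mul hVW hUD, galerkin_eq_galerkin_sandwich hVW hDU hUD, hMT', ← hUD,
    ← Matrix.mul_assoc, hDU, Matrix.one_mul, hDU]

end Galerkin

section Blocks

variable {l m n p α : Type*} [Fintype m] [Fintype n] [NonUnitalNonAssocSemiring α]

theorem fromBlocks_same_mul_fromBlocks_diag_mul_fromBlocks_same (S : Matrix l m α)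
    (X Y : Matrix m n α) (S' : Matrix n p α) :
    fromBlocks S S S S * fromBlocks X 0 0 Y * fromBlocks S' S' S' S' =
      fromBlocks (S * (X + Y) * S') (S * (X + Y) * S') (S * (X + Y) * S') (S * (X + Y) * S') := by
  simp only [fromBlocks_multiply, Matrix.mul_zero, add_zero, zero_add, Matrix.mul_add,
    Matrix.add_mul]

theorem fromBlocks_diag_mul_fromBlocks_same_mul_fromBlocks_diag (A B : Matrix l m α)
    (S : Matrix m n α) (C D : Matrix n p α) :
    fromBlocks A 0 0 B * fromBlocks S S S S * fromBlocks C 0 0 D =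
      fromBlocks (A * S * C) (A * S * D) (B * S * C) (B * S * D) := by
  simp only [fromBlocks_multiply, Matrix.mul_zero, Matrix.zero_mul, add_zero, zero_add]

end Blocks

theorem Nbar_mul_fromBlocks_diag_mul_fromBlocks_same {n : ℕ}
    (X Y S : Matrix (Fin n) (Fin n) ℂ) :
    Nbar n * fromBlocks X 0 0 Y * fromBlocks S S S S =
      (1 / 2 : ℂ) • fromBlocks ((X + Y) * S) ((X + Y) * S) ((X + Y) * S) ((X + Y) * S) := by
  rw [Nbar, Matrix.smul_mul, Matrix.smul_mul,
    fromBlocks_same_mul_fromBlocks_diag_mul_fromBlocks_same, Matrix.one_mul]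

theorem Nbar_mul_fromBlocks_diag_mul_Nbar {n : ℕ} (X Y : Matrix (Fin n) (Fin n) ℂ) :
    Nbar n * fromBlocks X 0 0 Y * Nbar n =
      (1 / 4 : ℂ) • fromBlocks (X + Y) (X + Y) (X + Y) (X + Y) := by
  nth_rw 2 [Nbar]
  rw [Matrix.mul_smul, Nbar_mul_fromBlocks_diag_mul_fromBlocks_same, smul_smul,
    Matrix.mul_one]
  norm_num

theorem one_sub_fromBlocks {m n α : Type*} [DecidableEq m] [DecidableEq n] [Ring α]
    (A : Matrix m m α) (B : Matrix m n α) (C : Matrix n m α) (D : Matrix n n α) :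
    1 - fromBlocks A B C D = fromBlocks (1 - A) (-B) (-C) (1 - D) := by
  rw [← fromBlocks_one, sub_eq_add_neg, fromBlocks_neg, fromBlocks_add]
  simp only [sub_eq_add_neg, zero_add]

theorem red_cgc_decomposition_general {n : ℕ}
    (Dr Db : Matrix (Fin n) (Fin n ⊕ Fin n) ℂ)
    (hpart : IsRBPartition Dr Db)
    (W V A : Matrix (Fin n ⊕ Fin n) (Fin n ⊕ Fin n) ℂ)
    (lamL lamH : Fin n → ℂ)
    (hbi : Vᴴ * W = 1)
    (hred : Vᴴ * (Drᵀ * Dr) * W = Nbar n)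
    (hA : A = W * Matrix.fromBlocks (diagonal lamL) 0 0 (diagonal lamH) * Vᴴ)
    (pRL pRH pIL pIH : Fin n → ℂ)
    (FbarR FbarI : Matrix (Fin n ⊕ Fin n) (Fin n ⊕ Fin n) ℂ)
    (hFbarR : FbarR = W * Matrix.fromBlocks (diagonal pRL) 0 0 (diagonal pRH) * Vᴴ)
    (hFbarI : FbarI = W * Matrix.fromBlocks (diagonal pIL) 0 0 (diagonal pIH) * Vᴴ)
    (Δbar : Matrix (Fin n) (Fin n) ℂ)
    (hΔdef : Δbar = diagonal pRL * diagonal lamL * diagonal pIL +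
        diagonal pRH * diagonal lamH * diagonal pIH)
    (hΔ : IsUnit Δbar) :
    1 - (FbarI * Drᵀ) * (Dr * FbarR * A * FbarI * Drᵀ)⁻¹ * (Dr * FbarR) * A =
      W * Matrix.fromBlocks
        (1 - diagonal pIL * Δbar⁻¹ * diagonal pRL * diagonal lamL)
        (-(diagonal pIL * Δbar⁻¹ * diagonal pRH * diagonal lamH))
        (-(diagonal pIH * Δbar⁻¹ * diagonal pRL * diagonal lamL))
        (1 - diagonal pIH * Δbar⁻¹ * diagonal pRH * diagonal lamH) * Vᴴ := by
  obtain ⟨-, -, hDU, -, -, -, -⟩ := hpart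
  have hUD : Drᵀ * Dr = W * Nbar n * Vᴴ := eq_conj_of_conj_eq hbi hred
  have hcoarse : Dr * FbarR * A * FbarI * Drᵀ =
      Dr * (W * fromBlocks (diagonal pRL * diagonal lamL * diagonal pIL) 0 0
        (diagonal pRH * diagonal lamH * diagonal pIH) * Vᴴ) * Drᵀ := by
    rw [show Dr * FbarR * A * FbarI * Drᵀ = Dr * (FbarR * A * FbarI) * Drᵀ by
      simp only [Matrix.mul_assoc], hFbarR, hA, hFbarI, conj_mul_conj hbi, conj_mul_conj hbi,
      fromBlocks_multiply, fromBlocks_multiply]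
    simp only [Matrix.mul_zero, Matrix.zero_mul, add_zero, zero_add]
  have hT : Nbar n * fromBlocks ((4 : ℂ) • Δbar⁻¹) 0 0 0 * Nbar n =
      fromBlocks Δbar⁻¹ Δbar⁻¹ Δbar⁻¹ Δbar⁻¹ := by
    rw [Nbar_mul_fromBlocks_diag_mul_Nbar, add_zero, fromBlocks_smul, smul_smul]
    norm_num
  have hΔinv : Δbar * Δbar⁻¹ = 1 := Matrix.mul_nonsing_inv _ ((isUnit_iff_isUnit_det _).mp hΔ)
  have hM : Nbar n * fromBlocks (diagonal pRL * diagonal lamL * diagonal pIL) 0 0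
      (diagonal pRH * diagonal lamH * diagonal pIH) *
      (Nbar n * fromBlocks ((4 : ℂ) • Δbar⁻¹) 0 0 0 * Nbar n) = Nbar n := by
    rw [hT, Nbar_mul_fromBlocks_diag_mul_fromBlocks_same, ← hΔdef, hΔinv]
    rfl
  rw [hcoarse, galerkin_inv_eq hbi hDU hUD hM, hFbarI, hFbarR, hA, galerkin_correction hbi hUD,
    hT, conj_mul_conj hbi, one_sub_conj hbi,
    fromBlocks_diag_mul_fromBlocks_same_mul_fromBlocks_diag, fromBlocks_multiply]
  simp only [Matrix.mul_zero, add_zero, zero_add, one_sub_fromBlocks]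

/-- Eigen-decomposition of the red coarse grid correction matrix
`K̄ = I − Ī_I Ā⁻¹ Ī_R A` in a red–black harmonic two-grid configuration:
`K̄ = W [[Γ̄_{L→L}, Γ̄_{H→L}], [Γ̄_{L→H}, Γ̄_{H→H}]] Vᴴ`. -/
theorem red_cgc_decomposition {n : ℕ}
    (Dr Db : Matrix (Fin n) (Fin n ⊕ Fin n) ℂ)
    (hpart : IsRBPartition Dr Db)
    (W V A : Matrix (Fin n ⊕ Fin n) (Fin n ⊕ Fin n) ℂ)
    (lamL lamH : Fin n → ℂ)
    (hbi : Vᴴ * W = 1)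
    (hred : Vᴴ * (Drᵀ * Dr) * W = Nbar n)
    (hblack : Vᴴ * (Dbᵀ * Db) * W = Ntil n)
    (hA : A = W * Matrix.fromBlocks (diagonal lamL) 0 0 (diagonal lamH) * Vᴴ)
    (pRL pRH pIL pIH : Fin n → ℂ)
    (FbarR FbarI : Matrix (Fin n ⊕ Fin n) (Fin n ⊕ Fin n) ℂ)
    (hFbarR : FbarR = W * Matrix.fromBlocks (diagonal pRL) 0 0 (diagonal pRH) * Vᴴ)
    (hFbarI : FbarI = W * Matrix.fromBlocks (diagonal pIL) 0 0 (diagonal pIH) * Vᴴ)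
    (Δbar : Matrix (Fin n) (Fin n) ℂ)
    (hΔdef : Δbar = diagonal pRL * diagonal lamL * diagonal pIL +
        diagonal pRH * diagonal lamH * diagonal pIH)
    (hΔ : IsUnit Δbar) :
    1 - (FbarI * Drᵀ) * (Dr * FbarR * A * FbarI * Drᵀ)⁻¹ * (Dr * FbarR) * A =
      W * Matrix.fromBlocks
        (1 - diagonal pIL * Δbar⁻¹ * diagonal pRL * diagonal lamL)
        (-(diagonal pIL * Δbar⁻¹ * diagonal pRH * diagonal lamH))
        (-(diagonal pIH * Δbar⁻¹ * diagonal pRL * diagonal lamL))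
        (1 - diagonal pIH * Δbar⁻¹ * diagonal pRH * diagonal lamH) * Vᴴ :=
  red_cgc_decomposition_general Dr Db hpart W V A lamL lamH hbi hred hA pRL pRH pIL pIH FbarR FbarI
    hFbarR hFbarI Δbar hΔdef hΔ
end

section
/- In a red–black harmonic two-grid configuration with Δ̃ = Π̃_{R,L} Λ_L Π̃_{I,L} + Π̃_{R,H} Λ_H Π̃_{I,H} invertible, the black coarse grid correction matrix K̃ = I − (F̃_I Ũ) Ã⁻¹ (D̃ F̃_R) A, where Ã = D̃ F̃_R A F̃_I Ũ, admits the decomposition K̃ = W · [[Γ̃_{L→L}, Γ̃_{H→L}],[Γ̃_{L→H}, Γ̃_{H→H}]] · Vᴴ with diagonal blocks Γ̃_{L→L} = I − Π̃_{I,L} Δ̃⁻¹ Π̃_{R,L} Λ_L, Γ̃_{H→L} = +Π̃_{I,L} Δ̃⁻¹ Π̃_{R,H} Λ_H, Γ̃_{L→H} = +Π̃_{I,H} Δ̃⁻¹ Π̃_{R,L} Λ_L and Γ̃_{H→H} = I − Π̃_{I,H} Δ̃⁻¹ Π̃_{R,H} Λ_H. -/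
open Matrix

/-!
Put `S = D̃ W` and `T = Vᴴ Ũ`. Then `S T = I`, `T S = Vᴴ Ũ D̃ W = Ñ`, and in eigen-coordinates
`K̃ = W (I − Π̃_I T (S X T)⁻¹ S Π̃_R Λ) Vᴴ` with `X = Π̃_R Λ Π̃_I`. Since `Ñ = P Q` with
`P = [I; −I]` and `Q = ½ [I, −I]`, the map `T (S X T)⁻¹ S` equals `P (Q X P)⁻¹ Q`, and
`Q X P = ½ Δ̃`; the middle factor is `[[Δ̃⁻¹, −Δ̃⁻¹], [−Δ̃⁻¹, Δ̃⁻¹]]`, which gives the four blocks.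
-/

namespace Matrix

variable {l m α : Type*} [Fintype l] [Fintype m] [DecidableEq m] [CommRing α]

/-- `R = S P` and `L = Q T` are mutually inverse, `S = R Q` and `T = P L`, so `R` and `L` cancel
from `T (R (Q X P) L)⁻¹ S`. -/
theorem mul_inv_mul_eq_of_mul_eq_one_of_mul_eq {S Q : Matrix m l α} {T P : Matrix l m α}
    (hST : S * T = 1) (hTS : T * S = P * Q) (X : Matrix l l α) :
    T * (S * X * T)⁻¹ * S = P * (Q * X * P)⁻¹ * Q := by
  set R := S * P
  set L := Q * T
  have hRL : R * L = 1 := by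
    calc S * P * (Q * T) = S * (T * S) * T := by rw [hTS]; simp only [Matrix.mul_assoc]
      _ = 1 := by rw [← Matrix.mul_assoc, hST, Matrix.one_mul, hST]
  have hLR : L * R = 1 := mul_eq_one_comm.mp hRL
  have hS : S = R * Q := by
    calc S = S * T * S := by rw [hST, Matrix.one_mul]
      _ = R * Q := by rw [Matrix.mul_assoc, hTS, ← Matrix.mul_assoc]
  have hT : T = P * L := by
    calc T = T * S * T := by rw [Matrix.mul_assoc, hST, Matrix.mul_one]
      _ = P * L := by rw [hTS, Matrix.mul_assoc]
  have hSXT : S * X * T = R * (Q * X * P) * L := by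
    conv_lhs => rw [hS, hT]
    simp only [Matrix.mul_assoc]
  rw [hSXT, mul_inv_rev, mul_inv_rev, inv_eq_left_inv hRL, inv_eq_left_inv hLR]
  conv_lhs => rw [hS, hT]
  calc P * L * (R * ((Q * X * P)⁻¹ * L)) * (R * Q)
      = P * (L * R) * (Q * X * P)⁻¹ * (L * R) * Q := by simp only [Matrix.mul_assoc]
    _ = P * (Q * X * P)⁻¹ * Q := by rw [hLR, Matrix.mul_one, Matrix.mul_one]

theorem galerkin_correction_eq_conj [DecidableEq l] {W V : Matrix l l α} (hVW : V * W = 1)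
    (Λ PR PI : Matrix l l α) (D : Matrix m l α) (U : Matrix l m α) :
    1 - (W * PI * V * U) * (D * (W * PR * V) * (W * Λ * V) * (W * PI * V) * U)⁻¹ *
        (D * (W * PR * V)) * (W * Λ * V) =
      W * (1 - PI * ((V * U) * (D * W * (PR * Λ * PI) * (V * U))⁻¹ * (D * W)) * (PR * Λ)) * V := by
  rw [Matrix.mul_sub, Matrix.sub_mul, Matrix.mul_one, mul_eq_one_comm.mp hVW]
  simp only [Matrix.mul_assoc, ← Matrix.mul_assoc V W, hVW, Matrix.one_mul]

theorem fromCols_one_neg_one_mul_fromBlocks_mul_fromRows (A B : Matrix m m α) :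
    fromCols (1 : Matrix m m α) (-1 : Matrix m m α) * fromBlocks A 0 0 B *
        fromRows (1 : Matrix m m α) (-1 : Matrix m m α) = A + B := by
  simp [fromCols_mul_fromBlocks, fromCols_mul_fromRows]

theorem fromRows_one_neg_one_mul_mul_fromCols (M : Matrix m m α) :
    fromRows (1 : Matrix m m α) (-1 : Matrix m m α) * M *
        fromCols (1 : Matrix m m α) (-1 : Matrix m m α) = fromBlocks M (-M) (-M) M := by
  simp [fromRows_mul]

theorem fromRows_one_neg_one_mul_inv_smul_mul_smul_fromCols {K : Type*} [Field K] {c : K}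
    (hc : c ≠ 0) {M : Matrix m m K} (hM : IsUnit M) :
    fromRows (1 : Matrix m m K) (-1 : Matrix m m K) * (c • M)⁻¹ *
        (c • fromCols (1 : Matrix m m K) (-1 : Matrix m m K)) =
      fromBlocks M⁻¹ (-M⁻¹) (-M⁻¹) M⁻¹ := by
  have hinv : (c • M)⁻¹ = c⁻¹ • M⁻¹ := inv_eq_left_inv <| by
    rw [Matrix.smul_mul, Matrix.mul_smul, smul_smul, inv_mul_cancel₀ hc, one_smul,
      nonsing_inv_mul _ ((isUnit_iff_isUnit_det _).mp hM)]
  rw [hinv, Matrix.mul_smul, Matrix.mul_smul, Matrix.smul_mul, smul_smul, mul_inv_cancel₀ hc,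
    one_smul, fromRows_one_neg_one_mul_mul_fromCols]

end Matrix

theorem Ntil_eq_fromRows_mul_fromCols (n : ℕ) :
    Ntil n = fromRows 1 (-1 : Matrix (Fin n) (Fin n) ℂ) *
      ((2 : ℂ)⁻¹ • fromCols 1 (-1 : Matrix (Fin n) (Fin n) ℂ)) := by
  rw [Ntil, Matrix.mul_smul, fromRows_mul_fromCols]
  simp

theorem black_cgc_decomposition_general {n : ℕ}
    (Dr Db : Matrix (Fin n) (Fin n ⊕ Fin n) ℂ)
    (hpart : IsRBPartition Dr Db)
    (W V A : Matrix (Fin n ⊕ Fin n) (Fin n ⊕ Fin n) ℂ)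
    (lamL lamH : Fin n → ℂ)
    (hbi : Vᴴ * W = 1)
    (hblack : Vᴴ * (Dbᵀ * Db) * W = Ntil n)
    (hA : A = W * Matrix.fromBlocks (diagonal lamL) 0 0 (diagonal lamH) * Vᴴ)
    (qRL qRH qIL qIH : Fin n → ℂ)
    (FtilR FtilI : Matrix (Fin n ⊕ Fin n) (Fin n ⊕ Fin n) ℂ)
    (hFtilR : FtilR = W * Matrix.fromBlocks (diagonal qRL) 0 0 (diagonal qRH) * Vᴴ)
    (hFtilI : FtilI = W * Matrix.fromBlocks (diagonal qIL) 0 0 (diagonal qIH) * Vᴴ)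
    (Δtil : Matrix (Fin n) (Fin n) ℂ)
    (hΔdef : Δtil = diagonal qRL * diagonal lamL * diagonal qIL +
        diagonal qRH * diagonal lamH * diagonal qIH)
    (hΔ : IsUnit Δtil) :
    1 - (FtilI * Dbᵀ) * (Db * FtilR * A * FtilI * Dbᵀ)⁻¹ * (Db * FtilR) * A =
      W * Matrix.fromBlocks
        (1 - diagonal qIL * Δtil⁻¹ * diagonal qRL * diagonal lamL)
        (diagonal qIL * Δtil⁻¹ * diagonal qRH * diagonal lamH)
        (diagonal qIH * Δtil⁻¹ * diagonal qRL * diagonal lamL)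
        (1 - diagonal qIH * Δtil⁻¹ * diagonal qRH * diagonal lamH) * Vᴴ := by
  obtain ⟨-, -, -, hDbDbT, -, -, -⟩ := hpart
  set P : Matrix (Fin n ⊕ Fin n) (Fin n) ℂ := fromRows 1 (-1)
  set C : Matrix (Fin n) (Fin n ⊕ Fin n) ℂ := fromCols 1 (-1)
  set PR := fromBlocks (diagonal qRL) 0 0 (diagonal qRH)
  set PI := fromBlocks (diagonal qIL) 0 0 (diagonal qIH)
  set Λ := fromBlocks (diagonal lamL) 0 0 (diagonal lamH)
  have hST : Db * W * (Vᴴ * Dbᵀ) = 1 := by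
    rw [Matrix.mul_assoc, ← Matrix.mul_assoc W, mul_eq_one_comm.mp hbi, Matrix.one_mul, hDbDbT]
  have hTS : Vᴴ * Dbᵀ * (Db * W) = P * ((2 : ℂ)⁻¹ • C) := by
    rw [← Ntil_eq_fromRows_mul_fromCols, ← hblack]
    simp only [Matrix.mul_assoc]
  have hcoarse : (2 : ℂ)⁻¹ • C * (PR * Λ * PI) * P = (2 : ℂ)⁻¹ • Δtil := by
    simp only [PR, PI, Λ, C, P, fromBlocks_multiply, Matrix.mul_zero, Matrix.zero_mul, add_zero,
      zero_add, Matrix.smul_mul, Matrix.fromCols_one_neg_one_mul_fromBlocks_mul_fromRows, hΔdef]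
  rw [hFtilI, hFtilR, hA, Matrix.galerkin_correction_eq_conj hbi,
    Matrix.mul_inv_mul_eq_of_mul_eq_one_of_mul_eq hST hTS, hcoarse,
    Matrix.fromRows_one_neg_one_mul_inv_smul_mul_smul_fromCols (inv_ne_zero two_ne_zero) hΔ,
    ← fromBlocks_one]
  simp only [PR, PI, Λ, fromBlocks_multiply, Matrix.mul_zero, Matrix.zero_mul, add_zero, zero_add,
    Matrix.mul_neg, Matrix.neg_mul, neg_zero, sub_eq_add_neg, fromBlocks_neg, fromBlocks_add,
    neg_neg, Matrix.mul_assoc]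

/-- Eigen-decomposition of the black coarse grid correction matrix
`K̃ = I − Ĩ_I Ã⁻¹ Ĩ_R A` in a red–black harmonic two-grid configuration:
`K̃ = W [[Γ̃_{L→L}, Γ̃_{H→L}], [Γ̃_{L→H}, Γ̃_{H→H}]] Vᴴ` (with `+` signs in the
off-diagonal, aliasing, blocks). -/
theorem black_cgc_decomposition {n : ℕ}
    (Dr Db : Matrix (Fin n) (Fin n ⊕ Fin n) ℂ)
    (hpart : IsRBPartition Dr Db)
    (W V A : Matrix (Fin n ⊕ Fin n) (Fin n ⊕ Fin n) ℂ)
    (lamL lamH : Fin n → ℂ)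
    (hbi : Vᴴ * W = 1)
    (hred : Vᴴ * (Drᵀ * Dr) * W = Nbar n)
    (hblack : Vᴴ * (Dbᵀ * Db) * W = Ntil n)
    (hA : A = W * Matrix.fromBlocks (diagonal lamL) 0 0 (diagonal lamH) * Vᴴ)
    (qRL qRH qIL qIH : Fin n → ℂ)
    (FtilR FtilI : Matrix (Fin n ⊕ Fin n) (Fin n ⊕ Fin n) ℂ)
    (hFtilR : FtilR = W * Matrix.fromBlocks (diagonal qRL) 0 0 (diagonal qRH) * Vᴴ)
    (hFtilI : FtilI = W * Matrix.fromBlocks (diagonal qIL) 0 0 (diagonal qIH) * Vᴴ)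
    (Δtil : Matrix (Fin n) (Fin n) ℂ)
    (hΔdef : Δtil = diagonal qRL * diagonal lamL * diagonal qIL +
        diagonal qRH * diagonal lamH * diagonal qIH)
    (hΔ : IsUnit Δtil) :
    1 - (FtilI * Dbᵀ) * (Db * FtilR * A * FtilI * Dbᵀ)⁻¹ * (Db * FtilR) * A =
      W * Matrix.fromBlocks
        (1 - diagonal qIL * Δtil⁻¹ * diagonal qRL * diagonal lamL)
        (diagonal qIL * Δtil⁻¹ * diagonal qRH * diagonal lamH)
        (diagonal qIH * Δtil⁻¹ * diagonal qRL * diagonal lamL)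
        (1 - diagonal qIH * Δtil⁻¹ * diagonal qRH * diagonal lamH) * Vᴴ :=
  black_cgc_decomposition_general Dr Db hpart W V A lamL lamH hbi hblack hA qRL qRH qIL qIH FtilR
    FtilI hFtilR hFtilI Δtil hΔdef hΔ
end

section
/- In a red–black harmonic two-grid configuration, assume A, the Galerkin coarse matrices Ā = D̄ F̄_R A F̄_I Ū and Ã = D̃ F̃_R A F̃_I Ũ, and all four inter-grid filters F̄_I, F̄_R, F̃_I, F̃_R are non-singular. Then the multiplicative scheme is a direct solver, i.e. K̃ K̄ = 0 where K̄ = I − (F̄_I Ū) Ā⁻¹ (D̄ F̄_R) A and K̃ = I − (F̃_I Ũ) Ã⁻¹ (D̃ F̃_R) A, if and only if Π̄_{R,L} Λ_L Π̃_{I,L} = Π̄_{R,H} Λ_H Π̃_{I,H}. -/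
/-!
Conjugation by `W` identifies every matrix in sight with a block matrix whose four blocks are
diagonal, i.e. with a family of `2 × 2` symbols indexed by the frequency `k`, and products become
frequency-wise products. The projector `DᵀD` of each coarse grid has the rank-one symbol
`N = ½ [[1, e], [e, 1]]` (`e = 1` red, `e = -1` black), and `N S N = ½ (a + b) N` for a diagonal
symbol `S = diag(a, b)`. Hence the Galerkin matrix `D M Dᵀ` can only be invertible when
`a + b ≠ 0` at every frequency, and then `Dᵀ (D M Dᵀ)⁻¹ D` has symbol `(2 / (a + b)) N`.
Consequently each coarse-grid correction has a rank-one symbol `s⁻¹ u vᵀ`, and a product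
`(u' v'ᵀ) (u vᵀ)` of two such symbols with `u' ≠ 0`, `v ≠ 0` vanishes exactly when `v' ⬝ u = 0`;
for the black correction after the red one this is the symbol condition.
-/

open Matrix

open Function

namespace Matrix

variable {ι m R : Type*}

section BlockSymbol

variable [CommRing R]

def diagSymbol (a b : ι → R) : ι → Matrix (Fin 2) (Fin 2) R := fun k => diagonal ![a k, b k]

theorem diagSymbol_mul (a b c d : ι → R) :
    diagSymbol a b * diagSymbol c d = diagSymbol (a * c) (b * d) := by
  ext1 k
  simp [diagSymbol, diagonal_mul_diagonal]

variable [Fintype ι] [DecidableEq ι]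

def blockSymbol : (ι → Matrix (Fin 2) (Fin 2) R) →+* Matrix (ι ⊕ ι) (ι ⊕ ι) R where
  toFun T := fromBlocks (diagonal fun k => T k 0 0) (diagonal fun k => T k 0 1)
    (diagonal fun k => T k 1 0) (diagonal fun k => T k 1 1)
  map_one' := by simp [← fromBlocks_one]
  map_mul' T T' := by
    simp only [fromBlocks_multiply, diagonal_mul_diagonal, diagonal_add, Pi.mul_apply, mul_apply,
      Fin.sum_univ_two]
  map_zero' := by simp
  map_add' T T' := by simp [fromBlocks_add, diagonal_add]

theorem blockSymbol_apply (T : ι → Matrix (Fin 2) (Fin 2) R) :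
    blockSymbol T = fromBlocks (diagonal fun k => T k 0 0) (diagonal fun k => T k 0 1)
      (diagonal fun k => T k 1 0) (diagonal fun k => T k 1 1) :=
  rfl

theorem blockSymbol_injective : Injective (blockSymbol : _ → Matrix (ι ⊕ ι) (ι ⊕ ι) R) := by
  intro T T' h
  ext k i j
  fin_cases i <;> fin_cases j
  · simpa [blockSymbol_apply] using congr($h (.inl k) (.inl k))
  · simpa [blockSymbol_apply] using congr($h (.inl k) (.inr k))
  · simpa [blockSymbol_apply] using congr($h (.inr k) (.inl k))
  · simpa [blockSymbol_apply] using congr($h (.inr k) (.inr k))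

theorem blockSymbol_diagSymbol (a b : ι → R) :
    blockSymbol (diagSymbol a b) = fromBlocks (diagonal a) 0 0 (diagonal b) := by
  simp [blockSymbol_apply, diagSymbol]

end BlockSymbol

variable [Fintype m] [DecidableEq m]

section Conj

variable [CommRing R] {W V : Matrix m m R}

def conjRingHom (W V : Matrix m m R) (h : V * W = 1) : Matrix m m R →+* Matrix m m R where
  toFun X := W * X * V
  map_one' := by rw [Matrix.mul_one, mul_eq_one_comm.mp h]
  map_mul' X Y := by simp only [Matrix.mul_assoc, ← Matrix.mul_assoc V W, h, Matrix.one_mul]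
  map_zero' := by simp
  map_add' X Y := by simp [Matrix.mul_add, Matrix.add_mul]

theorem conjRingHom_apply (h : V * W = 1) (X : Matrix m m R) : conjRingHom W V h X = W * X * V :=
  rfl

theorem eq_conjRingHom_iff (h : V * W = 1) {X Y : Matrix m m R} :
    X = conjRingHom W V h Y ↔ V * X * W = Y := by
  have h' : W * V = 1 := mul_eq_one_comm.mp h
  rw [conjRingHom_apply]
  constructor
  · rintro rfl
    simp only [Matrix.mul_assoc, h, Matrix.mul_one, ← Matrix.mul_assoc V W, Matrix.one_mul]
  · rintro rfl
    simp only [Matrix.mul_assoc, h', Matrix.mul_one, ← Matrix.mul_assoc W V, Matrix.one_mul]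

theorem conjRingHom_injective (h : V * W = 1) : Injective (conjRingHom W V h) := fun _ _ hXY =>
  ((eq_conjRingHom_iff h).mp rfl).symm.trans ((eq_conjRingHom_iff h).mp hXY)

end Conj

section Galerkin

variable {n p : Type*} [Fintype n] [CommRing R] {D : Matrix m n R} {E : Matrix n m R}
  {M : Matrix n n R}

theorem mul_eq_galerkin_inv_mul (hDE : D * E = 1) (hU : IsUnit (D * M * E))
    {Y : Matrix n p R} {Z : Matrix m p R} (h : E * D * M * (E * D) * Y = E * Z) :
    D * Y = (D * M * E)⁻¹ * Z := by
  have hDY : D * M * E * (D * Y) = Z := by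
    simpa only [← Matrix.mul_assoc, hDE, Matrix.one_mul] using congr(D * $h)
  rw [← hDY, nonsing_inv_mul_cancel_left _ _ ((isUnit_iff_isUnit_det _).mp hU)]

theorem mul_eq_zero_of_isUnit_galerkin (hDE : D * E = 1) (hU : IsUnit (D * M * E))
    {Y : Matrix n p R} (h : E * D * M * (E * D) * Y = 0) : E * D * Y = 0 := by
  rw [Matrix.mul_assoc, mul_eq_galerkin_inv_mul (Z := 0) hDE hU (by rw [h, Matrix.mul_zero]),
    Matrix.mul_zero, Matrix.mul_zero]

theorem mul_galerkin_inv_mul (hDE : D * E = 1) (hU : IsUnit (D * M * E)) {J : Matrix n n R}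
    (h : E * D * M * (E * D) * J = E * D) : E * (D * M * E)⁻¹ * D = E * D * J := by
  rw [Matrix.mul_assoc E _ D, Matrix.mul_assoc E D J, mul_eq_galerkin_inv_mul hDE hU h]

end Galerkin

theorem smul_vecMulVec_mul_smul_vecMulVec_eq_zero_iff {l n K : Type*} [Fintype n] [Field K]
    {a b : K} (ha : a ≠ 0) (hb : b ≠ 0) {u x : l → K} {v w : n → K} (hu : u ≠ 0) (hx : x ≠ 0) :
    (a • vecMulVec u v) * (b • vecMulVec w x) = 0 ↔ v ⬝ᵥ w = 0 := by
  rw [Matrix.smul_mul, Matrix.mul_smul, smul_smul, vecMulVec_mul_vecMulVec]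
  simp [ha, hb, hu, hx]

end Matrix

noncomputable def coarseGridCorrection {m n K : Type*} [Fintype m] [DecidableEq m] [Fintype n]
    [DecidableEq n] [Field K] (D : Matrix m n K) (FR FI A : Matrix n n K) : Matrix n n K :=
  1 - (FI * Dᵀ) * (D * FR * A * FI * Dᵀ)⁻¹ * (D * FR) * A

section Symbols

variable {K : Type*} [Field K]

def aliasPattern (e : K) : Matrix (Fin 2) (Fin 2) K := (2⁻¹ : K) • !![1, e; e, 1]

theorem aliasPattern_mul_self [NeZero (2 : K)] {e : K} (he : e * e = 1) :
    aliasPattern e * aliasPattern e = aliasPattern e := by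
  have hQ : !![1, e; e, 1] * !![1, e; e, 1] = (2 : K) • !![1, e; e, 1] := by
    ext i j
    fin_cases i <;> fin_cases j <;> simp [he, two_mul, one_add_one_eq_two]
  rw [aliasPattern, Matrix.smul_mul, Matrix.mul_smul, hQ, smul_smul, smul_smul,
    inv_mul_cancel_right₀ two_ne_zero]

theorem aliasPattern_mul_diagonal_mul {e : K} (he : e * e = 1) (a b : K) :
    aliasPattern e * diagonal ![a, b] * aliasPattern e = ((a + b) / 2) • aliasPattern e := by
  have hQ : !![1, e; e, 1] * diagonal ![a, b] * !![1, e; e, 1] = (a + b) • !![1, e; e, 1] := by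
    ext i j
    fin_cases i <;> fin_cases j <;> simp [diagonal_fin_two, mul_comm e, mul_assoc, he, ← add_mul]
  simp only [aliasPattern, Matrix.smul_mul, Matrix.mul_smul, hQ, smul_smul]
  congr 1
  ring

noncomputable def correctionSymbol (e α β x₁ x₂ : K) : Matrix (Fin 2) (Fin 2) K :=
  (α * x₁ + β * x₂)⁻¹ • vecMulVec ![β, -(e * α)] ![x₂, -(e * x₁)]

theorem one_sub_diagonal_mul_smul_aliasPattern_mul_diagonal [NeZero (2 : K)] {e : K}
    (he : e * e = 1) {x₁ x₂ α β : K} (hs : α * x₁ + β * x₂ ≠ 0) :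
    1 - diagonal ![x₁, x₂] * ((2 / (α * x₁ + β * x₂)) • aliasPattern e) * diagonal ![α, β] =
      correctionSymbol e α β x₁ x₂ := by
  have hG : (2 / (α * x₁ + β * x₂)) • aliasPattern e = (α * x₁ + β * x₂)⁻¹ • !![1, e; e, 1] := by
    rw [aliasPattern, smul_smul]
    congr 1
    field_simp
  have hinv := mul_inv_cancel₀ hs
  rw [hG]
  ext i j
  fin_cases i <;> fin_cases j <;> simp [correctionSymbol, diagonal_fin_two]
  · linear_combination -hinv
  · ring
  · ring
  · linear_combination -hinv - (α * x₁ + β * x₂)⁻¹ * α * x₁ * he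

theorem correctionSymbol_mul_eq_zero_iff {α β γ δ x₁ x₂ y₁ y₂ : K} (hs : α * x₁ + β * x₂ ≠ 0)
    (ht : γ * y₁ + δ * y₂ ≠ 0) :
    correctionSymbol (-1) γ δ y₁ y₂ * correctionSymbol 1 α β x₁ x₂ = 0 ↔ α * y₁ = β * y₂ := by
  have hu : ![δ, -(-1 * γ)] ≠ 0 := by
    contrapose! ht
    simp_all
  have hx : ![x₂, -(1 * x₁)] ≠ 0 := by
    contrapose! hs
    simp_all
  rw [correctionSymbol, correctionSymbol,
    smul_vecMulVec_mul_smul_vecMulVec_eq_zero_iff (inv_ne_zero ht) (inv_ne_zero hs) hu hx]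
  simp [dotProduct, Fin.sum_univ_two, add_neg_eq_zero, mul_comm, eq_comm]

theorem nbar_eq_blockSymbol (n : ℕ) : Nbar n = blockSymbol fun _ => aliasPattern 1 := by
  ext (i | i) (j | j) <;> by_cases h : i = j <;>
    simp [Nbar, blockSymbol_apply, aliasPattern, one_apply, h]

theorem ntil_eq_blockSymbol (n : ℕ) : Ntil n = blockSymbol fun _ => aliasPattern (-1) := by
  ext (i | i) (j | j) <;> by_cases h : i = j <;>
    simp [Ntil, blockSymbol_apply, aliasPattern, one_apply, h]

end Symbols

section CoarseGrid

variable {K ι : Type*} [Field K] [Fintype ι] [DecidableEq ι]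
  {Ψ : (ι → Matrix (Fin 2) (Fin 2) K) →+* Matrix (ι ⊕ ι) (ι ⊕ ι) K}
  {D : Matrix ι (ι ⊕ ι) K} {e : K} {a b : ι → K}

theorem galerkin_map_diagSymbol {m : Type*} (D : Matrix m (ι ⊕ ι) K) (rL rH lL lH iL iH : ι → K) :
    D * Ψ (diagSymbol rL rH) * Ψ (diagSymbol lL lH) * Ψ (diagSymbol iL iH) * Dᵀ =
      D * Ψ (diagSymbol (rL * lL * iL) (rH * lH * iH)) * Dᵀ := by
  simp only [← diagSymbol_mul, map_mul, Matrix.mul_assoc]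

theorem add_ne_zero_of_isUnit_galerkin [NeZero (2 : K)] (hΨ : Injective Ψ) (hD : D * Dᵀ = 1)
    (he : e * e = 1) (hP : Dᵀ * D = Ψ fun _ => aliasPattern e)
    (hU : IsUnit (D * Ψ (diagSymbol a b) * Dᵀ)) (k : ι) : a k + b k ≠ 0 := by
  intro hk
  -- then `P M P` annihilates the frequency-`k` unit `Ψ (Pi.single k 1)`, hence so does `P`
  have hNSN : ((fun _ => aliasPattern e) * diagSymbol a b * fun _ => aliasPattern e) *
      Pi.single k 1 = 0 := by
    rw [← Pi.single_mul_right]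
    simp [diagSymbol, aliasPattern_mul_diagonal_mul he, hk]
  have h := mul_eq_zero_of_isUnit_galerkin (Y := Ψ (Pi.single k 1)) hD hU
    (by rw [hP, ← map_mul, ← map_mul, ← map_mul, hNSN, map_zero])
  rw [hP, ← map_mul, map_eq_zero_iff Ψ hΨ, ← Pi.single_mul_right, Pi.single_eq_zero_iff] at h
  have h2 : (2 : K) = 0 := by simpa [aliasPattern] using congr($h 0 0)
  exact two_ne_zero h2

theorem transpose_mul_galerkin_inv_mul [NeZero (2 : K)] (hΨ : Injective Ψ) (hD : D * Dᵀ = 1)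
    (he : e * e = 1) (hP : Dᵀ * D = Ψ fun _ => aliasPattern e)
    (hU : IsUnit (D * Ψ (diagSymbol a b) * Dᵀ)) :
    Dᵀ * (D * Ψ (diagSymbol a b) * Dᵀ)⁻¹ * D = Ψ fun k => (2 / (a k + b k)) • aliasPattern e := by
  have hs := add_ne_zero_of_isUnit_galerkin hΨ hD he hP hU
  rw [mul_galerkin_inv_mul hD hU (J := Ψ fun k => (2 / (a k + b k)) • aliasPattern e), hP,
    ← map_mul]
  · congr 1
    ext1 k
    simp [aliasPattern_mul_self he]
  · rw [hP, ← map_mul, ← map_mul, ← map_mul]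
    congr 1
    ext1 k
    have hc : 2 / (a k + b k) * ((a k + b k) / 2) = 1 := by field_simp [hs k]
    simp [diagSymbol, aliasPattern_mul_diagonal_mul he, smul_smul, aliasPattern_mul_self he, hc]

theorem coarseGridCorrection_eq [NeZero (2 : K)] (hΨ : Injective Ψ) (hD : D * Dᵀ = 1)
    (he : e * e = 1) (hP : Dᵀ * D = Ψ fun _ => aliasPattern e) {lL lH rL rH iL iH : ι → K}
    (hU : IsUnit (D * Ψ (diagSymbol (rL * lL * iL) (rH * lH * iH)) * Dᵀ)) :
    coarseGridCorrection D (Ψ (diagSymbol rL rH)) (Ψ (diagSymbol iL iH)) (Ψ (diagSymbol lL lH)) =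
      Ψ fun k => correctionSymbol e (rL k * lL k) (rH k * lH k) (iL k) (iH k) := by
  have hs := add_ne_zero_of_isUnit_galerkin hΨ hD he hP hU
  have hassoc : (Ψ (diagSymbol iL iH) * Dᵀ) *
        (D * Ψ (diagSymbol (rL * lL * iL) (rH * lH * iH)) * Dᵀ)⁻¹ *
        (D * Ψ (diagSymbol rL rH)) * Ψ (diagSymbol lL lH) =
      Ψ (diagSymbol iL iH) * (Dᵀ * (D * Ψ (diagSymbol (rL * lL * iL) (rH * lH * iH)) * Dᵀ)⁻¹ * D) *
        Ψ (diagSymbol (rL * lL) (rH * lH)) := by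
    simp only [← diagSymbol_mul, map_mul, Matrix.mul_assoc]
  rw [coarseGridCorrection, galerkin_map_diagSymbol, hassoc,
    transpose_mul_galerkin_inv_mul hΨ hD he hP hU, ← map_mul, ← map_mul, ← map_one Ψ, ← map_sub]
  congr 1
  ext1 k
  exact one_sub_diagonal_mul_smul_aliasPattern_mul_diagonal he (hs k)

end CoarseGrid

theorem multiplicative_direct_iff_symbol_condition_general {n : ℕ}
    (Dr Db : Matrix (Fin n) (Fin n ⊕ Fin n) ℂ)
    (hpart : IsRBPartition Dr Db)
    (W V A : Matrix (Fin n ⊕ Fin n) (Fin n ⊕ Fin n) ℂ)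
    (lamL lamH : Fin n → ℂ)
    (hbi : Vᴴ * W = 1)
    (hred : Vᴴ * (Drᵀ * Dr) * W = Nbar n)
    (hblack : Vᴴ * (Dbᵀ * Db) * W = Ntil n)
    (hA : A = W * Matrix.fromBlocks (diagonal lamL) 0 0 (diagonal lamH) * Vᴴ)
    (pRL pRH pIL pIH qRL qRH qIL qIH : Fin n → ℂ)
    (FbarR FbarI FtilR FtilI : Matrix (Fin n ⊕ Fin n) (Fin n ⊕ Fin n) ℂ)
    (hFbarR : FbarR = W * Matrix.fromBlocks (diagonal pRL) 0 0 (diagonal pRH) * Vᴴ)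
    (hFbarI : FbarI = W * Matrix.fromBlocks (diagonal pIL) 0 0 (diagonal pIH) * Vᴴ)
    (hFtilR : FtilR = W * Matrix.fromBlocks (diagonal qRL) 0 0 (diagonal qRH) * Vᴴ)
    (hFtilI : FtilI = W * Matrix.fromBlocks (diagonal qIL) 0 0 (diagonal qIH) * Vᴴ)
    (hAbar : IsUnit (Dr * FbarR * A * FbarI * Drᵀ))
    (hAtil : IsUnit (Db * FtilR * A * FtilI * Dbᵀ)) :
    (1 - (FtilI * Dbᵀ) * (Db * FtilR * A * FtilI * Dbᵀ)⁻¹ * (Db * FtilR) * A) *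
        (1 - (FbarI * Drᵀ) * (Dr * FbarR * A * FbarI * Drᵀ)⁻¹ * (Dr * FbarR) * A) = 0 ↔
      diagonal pRL * diagonal lamL * diagonal qIL =
        diagonal pRH * diagonal lamH * diagonal qIH := by
  obtain ⟨-, -, hrr, hbb, -, -, -⟩ := hpart
  set Ψ := (conjRingHom W Vᴴ hbi).comp blockSymbol
  have hΨ : Injective Ψ := (conjRingHom_injective hbi).comp blockSymbol_injective
  have hΨdiag (a b : Fin n → ℂ) :
      W * fromBlocks (diagonal a) 0 0 (diagonal b) * Vᴴ = Ψ (diagSymbol a b) := by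
    rw [RingHom.comp_apply, blockSymbol_diagSymbol, conjRingHom_apply]
  rw [hΨdiag] at hA hFbarR hFbarI hFtilR hFtilI
  subst hA hFbarR hFbarI hFtilR hFtilI
  have hPr : Drᵀ * Dr = Ψ fun _ => aliasPattern 1 :=
    (eq_conjRingHom_iff hbi).mpr (hred.trans (nbar_eq_blockSymbol n))
  have hPb : Dbᵀ * Db = Ψ fun _ => aliasPattern (-1) :=
    (eq_conjRingHom_iff hbi).mpr (hblack.trans (ntil_eq_blockSymbol n))
  rw [galerkin_map_diagSymbol] at hAbar hAtil
  have hsr := add_ne_zero_of_isUnit_galerkin hΨ hrr (mul_one 1) hPr hAbar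
  have hsb := add_ne_zero_of_isUnit_galerkin hΨ hbb (by norm_num) hPb hAtil
  change coarseGridCorrection Db _ _ _ * coarseGridCorrection Dr _ _ _ = 0 ↔ _
  rw [coarseGridCorrection_eq hΨ hbb (by norm_num) hPb hAtil,
    coarseGridCorrection_eq hΨ hrr (mul_one 1) hPr hAbar, ← map_mul, map_eq_zero_iff Ψ hΨ,
    funext_iff]
  simp only [diagonal_mul_diagonal, diagonal_eq_diagonal_iff, Pi.mul_apply, Pi.zero_apply]
  exact forall_congr' fun k => correctionSymbol_mul_eq_zero_iff (hsr k) (hsb k)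

/-- In a red–black harmonic two-grid configuration with `A`, both Galerkin
coarse matrices and all four inter-grid filters non-singular, the multiplicative
scheme is a direct solver, `K̃ K̄ = 0`, iff
`Π̄_{R,L} Λ_L Π̃_{I,L} = Π̄_{R,H} Λ_H Π̃_{I,H}`. -/
theorem multiplicative_direct_iff_symbol_condition {n : ℕ}
    (Dr Db : Matrix (Fin n) (Fin n ⊕ Fin n) ℂ)
    (hpart : IsRBPartition Dr Db)
    (W V A : Matrix (Fin n ⊕ Fin n) (Fin n ⊕ Fin n) ℂ)
    (lamL lamH : Fin n → ℂ)
    (hbi : Vᴴ * W = 1)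
    (hred : Vᴴ * (Drᵀ * Dr) * W = Nbar n)
    (hblack : Vᴴ * (Dbᵀ * Db) * W = Ntil n)
    (hA : A = W * Matrix.fromBlocks (diagonal lamL) 0 0 (diagonal lamH) * Vᴴ)
    (pRL pRH pIL pIH qRL qRH qIL qIH : Fin n → ℂ)
    (FbarR FbarI FtilR FtilI : Matrix (Fin n ⊕ Fin n) (Fin n ⊕ Fin n) ℂ)
    (hFbarR : FbarR = W * Matrix.fromBlocks (diagonal pRL) 0 0 (diagonal pRH) * Vᴴ)
    (hFbarI : FbarI = W * Matrix.fromBlocks (diagonal pIL) 0 0 (diagonal pIH) * Vᴴ)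
    (hFtilR : FtilR = W * Matrix.fromBlocks (diagonal qRL) 0 0 (diagonal qRH) * Vᴴ)
    (hFtilI : FtilI = W * Matrix.fromBlocks (diagonal qIL) 0 0 (diagonal qIH) * Vᴴ)
    (hAu : IsUnit A)
    (hAbar : IsUnit (Dr * FbarR * A * FbarI * Drᵀ))
    (hAtil : IsUnit (Db * FtilR * A * FtilI * Dbᵀ))
    (hFbarRu : IsUnit FbarR) (hFbarIu : IsUnit FbarI)
    (hFtilRu : IsUnit FtilR) (hFtilIu : IsUnit FtilI) :
    (1 - (FtilI * Dbᵀ) * (Db * FtilR * A * FtilI * Dbᵀ)⁻¹ * (Db * FtilR) * A) *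
        (1 - (FbarI * Drᵀ) * (Dr * FbarR * A * FbarI * Drᵀ)⁻¹ * (Dr * FbarR) * A) = 0 ↔
      diagonal pRL * diagonal lamL * diagonal qIL =
        diagonal pRH * diagonal lamH * diagonal qIH :=
  multiplicative_direct_iff_symbol_condition_general Dr Db hpart W V A lamL lamH hbi hred hblack hA
    pRL pRH pIL pIH qRL qRH qIL qIH FbarR FbarI FtilR FtilI hFbarR hFbarI hFtilR hFtilI hAbar hAtil
end

section
/- Let n be even, let M ∈ ℂ^{n×n} have a black harmonic aliasing pattern with respect to a red–black partition with down-sampling matrix D̃, i.e. Vᴴ Ũ D̃ W = Ñ for biorthogonal eigenvectors W = [W_L W_H], V = [V_L V_H] (Vᴴ W = I). Then the down-sampled eigenvector blocks satisfy the biorthogonality relations (D̃ V_L)ᴴ (D̃ W_L) = (1/2) I, (D̃ V_L)ᴴ (D̃ W_H) = −(1/2) I, (D̃ V_H)ᴴ (D̃ W_L) = −(1/2) I, (D̃ V_H)ᴴ (D̃ W_H) = (1/2) I, and moreover (D̃ W)(D̃ V)ᴴ = (D̃ W_L)(D̃ V_L)ᴴ + (D̃ W_H)(D̃ V_H)ᴴ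 = I. -/
open Matrix

/-! A 0/1 down-sampling matrix satisfies `D̃ᴴ = D̃ᵀ = Ũ`, so each block of `Vᴴ Ũ D̃ W = Ñ` is one of the
products `(D̃ V_·)ᴴ (D̃ W_·)`. For the last identity, `Vᴴ W = I` forces `W Vᴴ = I`, whence
`(D̃ W)(D̃ V)ᴴ = D̃ D̃ᵀ = I`. -/

namespace Matrix

variable {α k m ι ι' : Type*}

lemma conjTranspose_eq_transpose_of_zero_or_one [NonAssocSemiring α] [StarRing α] {A : Matrix k m α}
    (hA : ∀ i j, A i j = 0 ∨ A i j = 1) : Aᴴ = Aᵀ := by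
  ext i j
  rcases hA j i with h | h <;> simp [h]

lemma mul_submatrix_id [Fintype m] [NonUnitalNonAssocSemiring α] (A : Matrix k m α)
    (B : Matrix m ι α) (g : ι' → ι) : A * B.submatrix id g = (A * B).submatrix id g := by
  rw [submatrix_mul A B id id g Function.bijective_id, submatrix_id_id]

lemma conjTranspose_mul_submatrix_mul_mul_submatrix [Fintype k] [Fintype m] [NonUnitalSemiring α]
    [StarRing α] (D : Matrix k m α) (V W : Matrix m ι α) (f g : ι' → ι) :
    (D * V.submatrix id f)ᴴ * (D * W.submatrix id g) = (Vᴴ * (Dᴴ * D) * W).submatrix f g := by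
  rw [mul_submatrix_id, mul_submatrix_id, conjTranspose_submatrix,
    ← submatrix_mul _ _ f id g Function.bijective_id, conjTranspose_mul, Matrix.mul_assoc,
    Matrix.mul_assoc, Matrix.mul_assoc]

lemma mul_conjTranspose_eq_sum_blocks {n₁ n₂ : Type*} [Fintype n₁] [Fintype n₂]
    [NonUnitalNonAssocSemiring α] [StarRing α] (A : Matrix k (n₁ ⊕ n₂) α)
    (B : Matrix m (n₁ ⊕ n₂) α) :
    A * Bᴴ = A.submatrix id Sum.inl * (B.submatrix id Sum.inl)ᴴ +
      A.submatrix id Sum.inr * (B.submatrix id Sum.inr)ᴴ := by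
  ext i j
  simp [mul_apply, Fintype.sum_sum_type]

end Matrix

open Matrix

lemma Ntil_eq_fromBlocks (n : ℕ) :
    Ntil n = fromBlocks ((1 / 2 : ℂ) • 1) (-((1 / 2 : ℂ) • 1)) (-((1 / 2 : ℂ) • 1))
      ((1 / 2 : ℂ) • 1) := by
  simp [Ntil, fromBlocks_smul]

theorem black_pattern_biorthogonal_relations_general {n : ℕ}
    (Dr Db : Matrix (Fin n) (Fin n ⊕ Fin n) ℂ)
    (hpart : IsRBPartition Dr Db)
    (W V : Matrix (Fin n ⊕ Fin n) (Fin n ⊕ Fin n) ℂ)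
    (hbi : Vᴴ * W = 1)
    (hblack : Vᴴ * (Dbᵀ * Db) * W = Ntil n) :
    (Db * V.submatrix id Sum.inl)ᴴ * (Db * W.submatrix id Sum.inl) = (1 / 2 : ℂ) • 1 ∧
    (Db * V.submatrix id Sum.inl)ᴴ * (Db * W.submatrix id Sum.inr) = -((1 / 2 : ℂ) • 1) ∧
    (Db * V.submatrix id Sum.inr)ᴴ * (Db * W.submatrix id Sum.inl) = -((1 / 2 : ℂ) • 1) ∧
    (Db * V.submatrix id Sum.inr)ᴴ * (Db * W.submatrix id Sum.inr) = (1 / 2 : ℂ) • 1 ∧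
    (Db * W) * (Db * V)ᴴ =
      (Db * W.submatrix id Sum.inl) * (Db * V.submatrix id Sum.inl)ᴴ +
        (Db * W.submatrix id Sum.inr) * (Db * V.submatrix id Sum.inr)ᴴ ∧
    (Db * W) * (Db * V)ᴴ = 1 := by
  obtain ⟨-, hDb01, -, hDbDbT, -, -, -⟩ := hpart
  have hDbH : Dbᴴ = Dbᵀ := conjTranspose_eq_transpose_of_zero_or_one hDb01
  have hblock (f g : Fin n → Fin n ⊕ Fin n) :
      (Db * V.submatrix id f)ᴴ * (Db * W.submatrix id g) = (Ntil n).submatrix f g := by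
    rw [conjTranspose_mul_submatrix_mul_mul_submatrix, hDbH, hblack]
  have hWV : W * Vᴴ = 1 := mul_eq_one_comm.mp hbi
  refine ⟨?_, ?_, ?_, ?_, ?_, ?_⟩
  iterate 4 (rw [hblock, Ntil_eq_fromBlocks]; rfl)
  · simp only [mul_conjTranspose_eq_sum_blocks (Db * W), mul_submatrix_id]
  · rw [conjTranspose_mul, hDbH, Matrix.mul_assoc, ← Matrix.mul_assoc W, hWV, Matrix.one_mul,
      hDbDbT]

/-- The black harmonic aliasing pattern `Vᴴ Ũ D̃ W = Ñ` is equivalent to the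
biorthogonality relations between the down-sampled eigenvector blocks:
`(D̃V_L)ᴴ(D̃W_L) = (1/2)I`, `(D̃V_L)ᴴ(D̃W_H) = −(1/2)I`,
`(D̃V_H)ᴴ(D̃W_L) = −(1/2)I`, `(D̃V_H)ᴴ(D̃W_H) = (1/2)I`, and moreover
`(D̃W)(D̃V)ᴴ = (D̃W_L)(D̃V_L)ᴴ + (D̃W_H)(D̃V_H)ᴴ = I`. -/
theorem black_pattern_biorthogonal_relations {n : ℕ}
    (Dr Db : Matrix (Fin n) (Fin n ⊕ Fin n) ℂ)
    (hpart : IsRBPartition Dr Db)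
    (W V M : Matrix (Fin n ⊕ Fin n) (Fin n ⊕ Fin n) ℂ)
    (e : Fin n ⊕ Fin n → ℂ)
    (hbi : Vᴴ * W = 1)
    (hM : M = W * Matrix.diagonal e * Vᴴ)
    (hblack : Vᴴ * (Dbᵀ * Db) * W = Ntil n) :
    (Db * V.submatrix id Sum.inl)ᴴ * (Db * W.submatrix id Sum.inl) = (1 / 2 : ℂ) • 1 ∧
    (Db * V.submatrix id Sum.inl)ᴴ * (Db * W.submatrix id Sum.inr) = -((1 / 2 : ℂ) • 1) ∧
    (Db * V.submatrix id Sum.inr)ᴴ * (Db * W.submatrix id Sum.inl) = -((1 / 2 : ℂ) • 1) ∧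
    (Db * V.submatrix id Sum.inr)ᴴ * (Db * W.submatrix id Sum.inr) = (1 / 2 : ℂ) • 1 ∧
    (Db * W) * (Db * V)ᴴ =
      (Db * W.submatrix id Sum.inl) * (Db * V.submatrix id Sum.inl)ᴴ +
        (Db * W.submatrix id Sum.inr) * (Db * V.submatrix id Sum.inr)ᴴ ∧
    (Db * W) * (Db * V)ᴴ = 1 :=
  black_pattern_biorthogonal_relations_general Dr Db hpart W V hbi hblack
end
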